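/- Let A = A₀ ⊕ A₁ be a Novikov superalgebra with dim A₁ = 1. Then A is of type N, i.e., A is a Novikov algebra under the same product with the grading forgotten. -/
import Mathlib


/-- A Novikov superalgebra over ℂ: a ℤ₂-graded vector space `V = A 0 ⊕ A 1`
with a bilinear product respecting the grading, satisfying the graded
left-symmetry and graded right-commutativity identities. -/
structure NovikovSuperAlgebra (V : Type*) [AddCommGroup V] [Module ℂ V] where
  mul : V →ₗ[ℂ] V →ₗ[ℂ] V
  grading : ZMod 2 → Submodule ℂ V
  spanning : ∀ x : V, ∃ x0 ∈ grading 0, ∃ x1 ∈ grading 1, x = x0 + x1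
  indep : ∀ x : V, x ∈ grading 0 → x ∈ grading 1 → x = 0
  mul_mem : ∀ i j : ZMod 2, ∀ u ∈ grading i, ∀ v ∈ grading j, mul u v ∈ grading (i + j)
  super_left_sym : ∀ i j : ZMod 2, ∀ u ∈ grading i, ∀ v ∈ grading j, ∀ w : V,
    mul (mul u v) w - mul u (mul v w)
      = ((-1 : ℂ) ^ (i.val * j.val)) • (mul (mul v u) w - mul v (mul u w))
  super_right_comm : ∀ i j : ZMod 2, ∀ u ∈ grading i, ∀ v ∈ grading j, ∀ w : V,
    mul (mul w u) v = ((-1 : ℂ) ^ (i.val * j.val)) • mul (mul w v) u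

/-- The (ungraded) Novikov algebra identities for a bilinear product. -/
def IsNovikovMul {V : Type*} [AddCommGroup V] [Module ℂ V]
    (mul : V →ₗ[ℂ] V →ₗ[ℂ] V) : Prop :=
  (∀ x y z : V, mul (mul x y) z - mul x (mul y z) = mul (mul y x) z - mul y (mul x z)) ∧
  (∀ x y z : V, mul (mul z x) y = mul (mul z y) x)

/-- Supercommutator of elements of parities `i`, `j`. -/
def sbr {V : Type*} [AddCommGroup V] [Module ℂ V]
    (mul : V →ₗ[ℂ] V →ₗ[ℂ] V) (i j : ZMod 2) (u v : V) : V :=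
  mul u v - ((-1 : ℂ) ^ (i.val * j.val)) • mul v u

/-- a Novikov superalgebra with `dim A₁ = 1` is of type N. -/
theorem dim_odd_one_type_N {V : Type*} [AddCommGroup V] [Module ℂ V]
    (N : NovikovSuperAlgebra V)
    (h : Module.finrank ℂ (N.grading 1) = 1) [FiniteDimensional ℂ (N.grading 1)] :
    IsNovikovMul N.mul := by
  classical
  obtain ⟨e, -, hgen⟩ := (finrank_eq_one_iff' (K := ℂ) (V := N.grading 1)).mp h
  set M := N.mul with hM
  have hrep : ∀ u ∈ N.grading 1, ∃ c : ℂ, u = c • (e : V) := by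
    intro u hu
    obtain ⟨c, hc⟩ := hgen ⟨u, hu⟩
    exact ⟨c, by simpa using congrArg Subtype.val hc.symm⟩
  have key11L : ∀ u ∈ N.grading 1, ∀ v ∈ N.grading 1, ∀ w : V,
      M (M u v) w - M u (M v w) = M (M v u) w - M v (M u w) := by
    intro u hu v hv w
    obtain ⟨a, rfl⟩ := hrep u hu
    obtain ⟨b, rfl⟩ := hrep v hv
    simp only [map_smul, LinearMap.smul_apply, smul_smul, ← smul_sub]
    rw [mul_comm a b]
  have key11R : ∀ u ∈ N.grading 1, ∀ v ∈ N.grading 1, ∀ w : V,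
      M (M w u) v = M (M w v) u := by
    intro u hu v hv w
    obtain ⟨a, rfl⟩ := hrep u hu
    obtain ⟨b, rfl⟩ := hrep v hv
    simp only [map_smul, LinearMap.smul_apply, smul_smul]
    rw [mul_comm a b]
  have hval : ∀ i j : ZMod 2, i.val * j.val = 0 ∨ (i = 1 ∧ j = 1) := by decide
  have homL : ∀ i j : ZMod 2, ∀ u ∈ N.grading i, ∀ v ∈ N.grading j, ∀ w : V,
      M (M u v) w - M u (M v w) = M (M v u) w - M v (M u w) := by
    intro i j u hu v hv w
    rcases hval i j with h0 | ⟨hi, hj⟩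
    · have := N.super_left_sym i j u hu v hv w
      rwa [h0, pow_zero, one_smul] at this
    · exact key11L u (hi ▸ hu) v (hj ▸ hv) w
  have homR : ∀ i j : ZMod 2, ∀ u ∈ N.grading i, ∀ v ∈ N.grading j, ∀ w : V,
      M (M w u) v = M (M w v) u := by
    intro i j u hu v hv w
    rcases hval i j with h0 | ⟨hi, hj⟩
    · have := N.super_right_comm i j u hu v hv w
      rwa [h0, pow_zero, one_smul] at this
    · exact key11R u (hi ▸ hu) v (hj ▸ hv) w
  constructor
  · intro x y z
    obtain ⟨x0, hx0, x1, hx1, rfl⟩ := N.spanning x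
    obtain ⟨y0, hy0, y1, hy1, rfl⟩ := N.spanning y
    have h00 := homL 0 0 x0 hx0 y0 hy0 z
    have h01 := homL 0 1 x0 hx0 y1 hy1 z
    have h10 := homL 1 0 x1 hx1 y0 hy0 z
    have h11 := homL 1 1 x1 hx1 y1 hy1 z
    simp only [map_add, LinearMap.add_apply]
    linear_combination (norm := abel) h00 + h01 + h10 + h11
  · intro x y z
    obtain ⟨x0, hx0, x1, hx1, rfl⟩ := N.spanning x
    obtain ⟨y0, hy0, y1, hy1, rfl⟩ := N.spanning y
    have h00 := homR 0 0 x0 hx0 y0 hy0 z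
    have h01 := homR 0 1 x0 hx0 y1 hy1 z
    have h10 := homR 1 0 x1 hx1 y0 hy0 z
    have h11 := homR 1 1 x1 hx1 y1 hy1 z
    simp only [map_add, LinearMap.add_apply]
    linear_combination (norm := abel) h00 + h01 + h10 + h11
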